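/- Let a, b : ℕ → ℝ be sequences of positive reals with b_n → ∞, and suppose there are constants η > 0, C > 0, C' > 0 and θ ∈ (0,1) such that a_n² + η b_n² ≤ C a_n^{2θ} b_n^{2(1−θ)} + C' b_n for all n. Then there exist constants C₁, C₂ > 0 and n₀ such that C₁ b_n ≤ a_n ≤ C₂ b_n for all n ≥ n₀. -/

import Mathlib

/-!
Once `b n` is large, the term `C' b_n` is absorbed into `η b_n² / 2`, and the remaining inequality
`a² + (η/2) b² ≤ C a^{2θ} b^{2(1-θ)}` is homogeneous of degree two. For the ratio `t = a/b` it reads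
`t² + η/2 ≤ C t^{2θ}`: dropping `t²` bounds `t` below, and dropping `η/2` bounds it above, since `2θ < 2`.
-/

open Filter

lemma div_rpow_inv_le_of_le_mul_rpow {t ε C p : ℝ} (ht : 0 ≤ t) (hε : 0 ≤ ε) (hC : 0 < C)
    (hp : 0 < p) (h : ε ≤ C * t ^ p) : (ε / C) ^ p⁻¹ ≤ t := by
  rw [Real.rpow_inv_le_iff_of_pos (by positivity) ht hp, div_le_iff₀ hC, mul_comm]
  exact h

lemma le_rpow_inv_of_sq_le_mul_rpow {t C p : ℝ} (ht : 0 < t) (hp : p < 2)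
    (h : t ^ 2 ≤ C * t ^ p) : t ≤ C ^ (2 - p)⁻¹ := by
  have hsplit : t ^ 2 = t ^ p * t ^ (2 - p) := by
    rw [← Real.rpow_add ht, add_sub_cancel, Real.rpow_two]
  have htp : 0 < t ^ p := Real.rpow_pos_of_pos ht p
  have hle : t ^ (2 - p) ≤ C := by
    rw [hsplit, mul_comm C] at h
    exact le_of_mul_le_mul_left h htp
  have hC : 0 ≤ C := (Real.rpow_pos_of_pos ht _).le.trans hle
  rwa [Real.le_rpow_inv_iff_of_pos ht.le hC (by linarith)]

lemma sq_div_add_le_mul_div_rpow {a b ε C p q : ℝ} (ha : 0 ≤ a) (hb : 0 < b) (hpq : p + q = 2)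
    (h : a ^ 2 + ε * b ^ 2 ≤ C * a ^ p * b ^ q) : (a / b) ^ 2 + ε ≤ C * (a / b) ^ p := by
  have hq : b ^ q = b ^ 2 / b ^ p := by
    rw [← Real.rpow_two, ← Real.rpow_sub hb, ← hpq, add_sub_cancel_left]
  have hbp : 0 < b ^ p := Real.rpow_pos_of_pos hb p
  rw [Real.div_rpow ha hb.le, div_pow, div_add' _ _ _ (by positivity), div_le_iff₀ (by positivity)]
  calc a ^ 2 + ε * b ^ 2 ≤ C * a ^ p * b ^ q := h
    _ = C * (a ^ p / b ^ p) * b ^ 2 := by rw [hq]; ring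

lemma mul_le_and_le_mul_of_sq_add_mul_sq_le {a b ε C p q : ℝ} (ha : 0 ≤ a) (hb : 0 < b)
    (hε : 0 < ε) (hC : 0 < C) (hp₀ : 0 < p) (hp₂ : p < 2) (hpq : p + q = 2)
    (h : a ^ 2 + ε * b ^ 2 ≤ C * a ^ p * b ^ q) :
    (ε / C) ^ p⁻¹ * b ≤ a ∧ a ≤ C ^ (2 - p)⁻¹ * b := by
  have hratio := sq_div_add_le_mul_div_rpow ha hb hpq h
  have hab : 0 ≤ a / b := div_nonneg ha hb.le
  constructor
  · rw [← le_div_iff₀ hb]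
    exact div_rpow_inv_le_of_le_mul_rpow hab hε.le hC hp₀ (by nlinarith [sq_nonneg (a / b)])
  · rcases ha.eq_or_lt with rfl | ha
    · positivity
    rw [← div_le_iff₀ hb]
    exact le_rpow_inv_of_sq_le_mul_rpow (div_pos ha hb) hp₂ (by linarith)

lemma eventually_mul_le_mul_sq (c : ℝ) {ε : ℝ} (hε : 0 < ε) :
    ∀ᶠ x : ℝ in atTop, c * x ≤ ε * x ^ 2 := by
  filter_upwards [eventually_ge_atTop 0, eventually_ge_atTop (c / ε)] with x hx₀ hx
  rw [div_le_iff₀ hε] at hx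
  nlinarith

theorem same_growth_rate_of_interpolation_inequality_general
    (a b : ℕ → ℝ) (ha : ∀ n, 0 < a n)
    (hbtop : Tendsto b atTop atTop)
    (η C C' θ : ℝ) (hη : 0 < η) (hC : 0 < C) (hθ : θ ∈ Set.Ioo (0:ℝ) 1)
    (hineq : ∀ n, (a n) ^ 2 + η * (b n) ^ 2 ≤
      C * (a n) ^ (2 * θ) * (b n) ^ (2 * (1 - θ)) + C' * b n) :
    ∃ C₁ > (0:ℝ), ∃ C₂ > (0:ℝ), ∃ n₀ : ℕ, ∀ n ≥ n₀,
      C₁ * b n ≤ a n ∧ a n ≤ C₂ * b n := by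
  obtain ⟨hθ₀, hθ₁⟩ := hθ
  have hη₂ : 0 < η / 2 := half_pos hη
  have habsorbed : ∀ᶠ n in atTop, 0 < b n ∧
      (a n) ^ 2 + η / 2 * (b n) ^ 2 ≤ C * (a n) ^ (2 * θ) * (b n) ^ (2 * (1 - θ)) := by
    filter_upwards [hbtop.eventually_gt_atTop 0,
      hbtop.eventually (eventually_mul_le_mul_sq C' hη₂)] with n hbn hsmall
    exact ⟨hbn, by linarith [hineq n]⟩
  obtain ⟨n₀, hn₀⟩ := habsorbed.exists_forall_of_atTop
  refine ⟨(η / 2 / C) ^ (2 * θ)⁻¹, by positivity, C ^ (2 - 2 * θ)⁻¹, by positivity, n₀,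
    fun n hn => ?_⟩
  obtain ⟨hbn, hn⟩ := hn₀ n hn
  exact mul_le_and_le_mul_of_sq_add_mul_sq_le (ha n).le hbn hη₂ hC (by linarith) (by linarith)
    (by ring) hn

/-- if `a_n² + η b_n² ≤ C a_n^{2θ} b_n^{2(1-θ)} + C' b_n` with `b_n → ∞`,
then `a_n` and `b_n` have the same growth rate. -/
theorem same_growth_rate_of_interpolation_inequality
    (a b : ℕ → ℝ) (ha : ∀ n, 0 < a n) (hb : ∀ n, 0 < b n)
    (hbtop : Tendsto b atTop atTop)
    (η C C' θ : ℝ) (hη : 0 < η) (hC : 0 < C) (hC' : 0 < C') (hθ : θ ∈ Set.Ioo (0:ℝ) 1)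
    (hineq : ∀ n, (a n) ^ 2 + η * (b n) ^ 2 ≤
      C * (a n) ^ (2 * θ) * (b n) ^ (2 * (1 - θ)) + C' * b n) :
    ∃ C₁ > (0:ℝ), ∃ C₂ > (0:ℝ), ∃ n₀ : ℕ, ∀ n ≥ n₀,
      C₁ * b n ≤ a n ∧ a n ≤ C₂ * b n :=
  same_growth_rate_of_interpolation_inequality_general a b ha hbtop η C C' θ hη hC hθ hineq
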